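/- arXiv:1306.0740 — 7 statements merged into one kernel-verified Lean document; each statement's English description precedes it below -/
import Mathlib

section
/- For every positive integer k, we have √(2πk)·e^{-k}·k^k·e^{1/(12k+1)} < k! < √(2πk)·e^{-k}·k^k·e^{1/(12k)}. -/
/-!
Write `s n = n! / (√(2n) (n/e)^n)` for Mathlib's `Stirling.stirlingSeq`, which tends to `√π`.
The step `log s n - log s (n+1)` is the series `∑ r^(k+1) / (2k+3)` with `r = (2n+1)⁻²`.
Bounding `1/(2k+3)` above by `1/3` and below by `3^-(k+1)` sandwiches it strictly between
the steps of `1/(12n)` and of `1/(12n+1)`. Telescoping to the limit gives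
`log √π + 1/(12n+1) < log s n < log √π + 1/(12n)`.
-/

open Filter Real Topology Stirling
open scoped Nat

section EventuallyStrictMono

variable {α : Type*} [Preorder α] [TopologicalSpace α] [OrderClosedTopology α]
  {u : ℕ → α} {L : α} {N n : ℕ}

theorem lt_of_tendsto_of_lt_succ (hu : ∀ n ≥ N, u n < u (n + 1))
    (hlim : Tendsto u atTop (𝓝 L)) (hn : N ≤ n) : u n < L := by
  obtain ⟨k, rfl⟩ := Nat.exists_eq_add_of_le hn
  have hv : StrictMono fun k => u (N + k) :=
    strictMono_nat_of_lt_succ fun k => hu (N + k) (Nat.le_add_right N k)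
  have hvlim : Tendsto (fun k => u (N + k)) atTop (𝓝 L) :=
    hlim.comp (tendsto_atTop_mono (Nat.le_add_left · N) tendsto_id)
  exact (hv (Nat.lt_succ_self k)).trans_le (hv.monotone.ge_of_tendsto hvlim (k + 1))

theorem lt_of_tendsto_of_succ_lt (hu : ∀ n ≥ N, u (n + 1) < u n)
    (hlim : Tendsto u atTop (𝓝 L)) (hn : N ≤ n) : L < u n :=
  lt_of_tendsto_of_lt_succ (α := αᵒᵈ) hu hlim hn

end EventuallyStrictMono

theorem tendsto_one_div_const_mul_add {c : ℝ} (hc : 0 < c) (a : ℝ) :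
    Tendsto (fun n : ℕ => 1 / (c * n + a)) atTop (𝓝 0) := by
  simpa only [one_div, Function.comp_def] using tendsto_inv_atTop_zero.comp <|
    tendsto_atTop_add_const_right _ a (tendsto_natCast_atTop_atTop.const_mul_atTop hc)

namespace Stirling

theorem log_stirlingSeq_sdiff_lt {n : ℕ} (hn : n ≠ 0) :
    log (stirlingSeq n) - log (stirlingSeq (n + 1)) < 1 / (12 * n) - 1 / (12 * (n + 1)) := by
  obtain ⟨m, rfl⟩ := Nat.exists_eq_add_one_of_ne_zero hn
  set x : ℝ := ↑(m + 1)
  have hx0 : 0 < x := by positivity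
  set r : ℝ := (1 / (2 * x + 1)) ^ 2 with hr
  have hr0 : 0 < r := by positivity
  have h1r : 1 - r = 4 * x * (x + 1) * r := by rw [hr]; field_simp; ring
  have hr1 : r < 1 := by linarith [show 0 < 4 * x * (x + 1) * r by positivity]
  have hgeo : HasSum (fun k : ℕ => r ^ (k + 1) / 3) (r * (1 - r)⁻¹ / 3) := by
    simpa only [← pow_succ'] using ((hasSum_geometric_of_lt_one hr0.le hr1).mul_left r).div_const 3
  calc _ < r * (1 - r)⁻¹ / 3 :=
        hasSum_lt (i := 1) (fun k => ?_) ?_ (log_stirlingSeq_sdiff_hasSum m) hgeo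
    _ = _ := by rw [h1r]; field_simp; ring
  · rw [one_div_mul_eq_div]
    gcongr
    push_cast; linarith [(k.cast_nonneg : (0:ℝ) ≤ k)]
  · rw [one_div_mul_eq_div]
    gcongr; norm_num

theorem sub_lt_log_stirlingSeq_sdiff {n : ℕ} (hn : n ≠ 0) :
    1 / (12 * n + 1) - 1 / (12 * (n + 1) + 1) < log (stirlingSeq n) - log (stirlingSeq (n + 1)) := by
  obtain ⟨m, rfl⟩ := Nat.exists_eq_add_one_of_ne_zero hn
  set x : ℝ := ↑(m + 1) with hx
  have hx1 : 1 ≤ x := by rw [hx]; exact_mod_cast Nat.le_add_left 1 m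
  set r : ℝ := (1 / (2 * x + 1)) ^ 2 with hr
  have hr0 : 0 < r := by positivity
  have h1r : 1 - r / 3 = (12 * x * (x + 1) + 2) * (r / 3) := by rw [hr]; field_simp; ring
  have hr1 : r / 3 < 1 := by linarith [show 0 < (12 * x * (x + 1) + 2) * (r / 3) by positivity]
  have hgeo : HasSum (fun k : ℕ => (r / 3) ^ (k + 1)) (r / 3 * (1 - r / 3)⁻¹) := by
    simpa only [← pow_succ'] using (hasSum_geometric_of_lt_one (by positivity) hr1).mul_left (r / 3)
  calc _ < 1 / (12 * x * (x + 1) + 2) := by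
        rw [div_sub_div _ _ (by positivity) (by positivity),
          div_lt_div_iff₀ (by positivity) (by positivity)]
        nlinarith
    _ = r / 3 * (1 - r / 3)⁻¹ := by rw [h1r]; field_simp
    _ ≤ _ := hasSum_le (fun k => ?_) hgeo (log_stirlingSeq_sdiff_hasSum m)
  have h3 : (2 * ↑(k + 1) + 1 : ℝ) ≤ 3 ^ (k + 1) := by
    have := one_add_mul_le_pow (a := (2:ℝ)) (by norm_num) (k + 1)
    norm_num at this ⊢; linarith
  rw [div_pow, one_div_mul_eq_div]
  gcongr

theorem stirlingSeq_pos {n : ℕ} (hn : n ≠ 0) : 0 < stirlingSeq n := by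
  obtain ⟨m, rfl⟩ := Nat.exists_eq_add_one_of_ne_zero hn
  exact stirlingSeq'_pos m

theorem tendsto_log_stirlingSeq : Tendsto (fun n => log (stirlingSeq n)) atTop (𝓝 (log √π)) :=
  tendsto_stirlingSeq_sqrt_pi.log (Real.sqrt_pos.mpr pi_pos).ne'

theorem stirlingSeq_lt_sqrt_pi_mul_exp {n : ℕ} (hn : n ≠ 0) :
    stirlingSeq n < √π * exp (1 / (12 * n)) := by
  have hlog := lt_of_tendsto_of_lt_succ (u := fun n => log (stirlingSeq n) - 1 / (12 * n)) (N := 1)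
    (fun m hm => by
      have := log_stirlingSeq_sdiff_lt (Nat.one_le_iff_ne_zero.mp hm)
      push_cast
      linarith)
    (by simpa using tendsto_log_stirlingSeq.sub (tendsto_one_div_const_mul_add (by norm_num) 0))
    (Nat.one_le_iff_ne_zero.mpr hn)
  calc stirlingSeq n = exp (log (stirlingSeq n)) := (exp_log (stirlingSeq_pos hn)).symm
    _ < exp (log √π + 1 / (12 * n)) := exp_lt_exp.mpr (by linarith)
    _ = _ := by rw [exp_add, exp_log (sqrt_pos.mpr pi_pos)]

theorem sqrt_pi_mul_exp_lt_stirlingSeq {n : ℕ} (hn : n ≠ 0) :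
    √π * exp (1 / (12 * n + 1)) < stirlingSeq n := by
  have hlog := lt_of_tendsto_of_succ_lt
    (u := fun n => log (stirlingSeq n) - 1 / (12 * n + 1)) (N := 1)
    (fun m hm => by
      have := sub_lt_log_stirlingSeq_sdiff (Nat.one_le_iff_ne_zero.mp hm)
      push_cast
      linarith)
    (by simpa using tendsto_log_stirlingSeq.sub (tendsto_one_div_const_mul_add (by norm_num) 1))
    (Nat.one_le_iff_ne_zero.mpr hn)
  calc √π * exp (1 / (12 * n + 1)) = exp (log √π + 1 / (12 * n + 1)) := by
        rw [exp_add, exp_log (sqrt_pos.mpr pi_pos)]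
    _ < exp (log (stirlingSeq n)) := exp_lt_exp.mpr (by linarith)
    _ = stirlingSeq n := exp_log (stirlingSeq_pos hn)

theorem factorial_eq_stirlingSeq_mul {n : ℕ} (hn : n ≠ 0) :
    (n ! : ℝ) = stirlingSeq n * (√(2 * n) * (n / exp 1) ^ n) := by
  have : 0 < (n : ℝ) := by positivity
  rw [stirlingSeq, div_mul_cancel₀ _ (by positivity)]

theorem sqrt_two_pi_mul_exp_neg_mul_pow (n : ℕ) :
    √(2 * π * n) * exp (-n) * (n : ℝ) ^ n = √π * (√(2 * n) * (n / exp 1) ^ n) := by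
  rw [show 2 * π * n = π * (2 * n) by ring, sqrt_mul pi_pos.le, div_pow, ← exp_nat_mul, mul_one,
    exp_neg]
  ring

end Stirling

theorem stmt_2 (k : ℕ) (hk : 0 < k) :
    Real.sqrt (2 * Real.pi * k) * Real.exp (-(k : ℝ)) * (k : ℝ) ^ k *
        Real.exp (1 / (12 * (k : ℝ) + 1)) < (Nat.factorial k : ℝ) ∧
    (Nat.factorial k : ℝ) <
      Real.sqrt (2 * Real.pi * k) * Real.exp (-(k : ℝ)) * (k : ℝ) ^ k *
        Real.exp (1 / (12 * (k : ℝ))) := by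
  have hk0 : k ≠ 0 := hk.ne'
  have hD : 0 < √(2 * k) * (k / exp 1) ^ k := by
    have : (0 : ℝ) < k := Nat.cast_pos.mpr hk
    positivity
  have lower := mul_lt_mul_of_pos_right (sqrt_pi_mul_exp_lt_stirlingSeq hk0) hD
  have upper := mul_lt_mul_of_pos_right (stirlingSeq_lt_sqrt_pi_mul_exp hk0) hD
  rw [factorial_eq_stirlingSeq_mul hk0, sqrt_two_pi_mul_exp_neg_mul_pow]
  constructor <;> linarith
end

section
/- Let m, d, k, t be positive integers with gcd(m,d) = 1, m > k·d, and t < k. Write Δ(m,d,k) = m(m+d)···(m+(k-1)d). If the number of distinct prime divisors ω(Δ(m,d,k)) is at most t, then m^{k-t} ≤ (k-1)! · ∏_{p | d} p^{-ord_p((k-1)!)}. -/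
/-!
For every prime `p` dividing `Δ = m (m + d) ⋯ (m + (k - 1) d)` discard one term in which `p`
has maximal order; at most `ω(Δ) ≤ t` terms are discarded, so at least `k - t` terms, each
`≥ m`, remain. Primes dividing `d` divide no term since `gcd(m, d) = 1`. For a prime `p ∤ d`,
at most `⌊(k - 1) / p ^ j⌋ + 1` of the `k` terms are divisible by `p ^ j`, and if there is one,
the discarded term is among them; summing over `j`, Legendre's formula shows that the remaining
terms have total `p`-order at most `ord_p ((k - 1)!)`. Hence their product divides `(k - 1)!`
with its `d`-part removed.
-/

open Finset

theorem Finset.exists_subset_card_le_forall_isMaxOn {ι β α : Type*} [LinearOrder α]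
    [DecidableEq ι] {s : Finset ι} (hs : s.Nonempty) (T : Finset β) (v : β → ι → α) :
    ∃ S ⊆ s, #S ≤ #T ∧ ∀ b ∈ T, ∃ i ∈ S, IsMaxOn (v b) s i := by
  choose g hg using fun b => s.exists_max_image (v b) hs
  refine ⟨T.image g, fun i hi => ?_, card_image_le, fun b hb => ⟨g b, mem_image_of_mem g hb, ?_⟩⟩
  · obtain ⟨b, -, rfl⟩ := mem_image.1 hi
    exact (hg b).1
  · exact isMaxOn_iff.2 (hg b).2

namespace Nat

theorem card_le_div_add_one_of_modEq {s : Finset ℕ} {q k : ℕ} (hs : s ⊆ range k)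
    (hmod : ∀ i ∈ s, ∀ j ∈ s, i ≡ j [MOD q]) : #s ≤ (k - 1) / q + 1 := by
  calc #s ≤ #(range ((k - 1) / q + 1)) := card_le_card_of_injOn (· / q) ?_ ?_
    _ = (k - 1) / q + 1 := card_range _
  · intro i hi
    have hik : i < k := mem_range.1 (hs hi)
    simpa [Nat.lt_succ_iff] using Nat.div_le_div_right (c := q) (by omega : i ≤ k - 1)
  · intro i hi j hj hij
    rw [← Nat.div_add_mod i q, ← Nat.div_add_mod j q, (hmod i hi j hj : i % q = j % q)]
    exact congrArg (q * · + j % q) hij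

theorem card_filter_dvd_add_mul_le {q d : ℕ} (hqd : q.Coprime d) (m k : ℕ) :
    #{i ∈ range k | q ∣ m + i * d} ≤ (k - 1) / q + 1 := by
  refine card_le_div_add_one_of_modEq (filter_subset _ _) fun i hi j hj => ?_
  have hi' := Nat.modEq_zero_iff_dvd.2 (mem_filter.1 hi).2
  have hj' := Nat.modEq_zero_iff_dvd.2 (mem_filter.1 hj).2
  exact (Nat.ModEq.add_left_cancel' m (hi'.trans hj'.symm)).cancel_right_of_coprime hqd

theorem Prime.sum_factorization_erase_le_factorization_factorial {p k i₀ : ℕ} (hp : p.Prime)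
    {f : ℕ → ℕ} (hf : ∀ i ∈ range k, f i ≠ 0)
    (hcount : ∀ j, #{i ∈ range k | p ^ j ∣ f i} ≤ (k - 1) / p ^ j + 1) (hi₀ : i₀ ∈ range k)
    (hmax : IsMaxOn (fun i => (f i).factorization p) (range k) i₀) :
    ∑ i ∈ (range k).erase i₀, (f i).factorization p ≤ (k - 1)!.factorization p := by
  set b := ∑ i ∈ range k, f i + k
  have hfb : ∀ i ∈ range k, f i < p ^ b := fun i hi =>
    (single_le_sum (fun _ _ => Nat.zero_le _) hi).trans_lt
      ((Nat.le_add_right _ k).trans_lt (Nat.lt_pow_self hp.one_lt))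
  have hkb : log p (k - 1) < b := by
    have := mem_range.1 hi₀
    exact (log_le_self p (k - 1)).trans_lt (by omega)
  have hfilter : ∀ j, #{i ∈ (range k).erase i₀ | p ^ j ∣ f i} ≤ (k - 1) / p ^ j := by
    intro j
    rw [filter_erase]
    by_cases hj : p ^ j ∣ f i₀
    · rw [card_erase_of_mem (mem_filter.2 ⟨hi₀, hj⟩)]
      exact Nat.sub_le_of_le_add (hcount j)
    · suffices {i ∈ range k | p ^ j ∣ f i} = ∅ by simp [this]
      refine filter_eq_empty_iff.2 fun i hi hij => hj ?_
      rw [hp.pow_dvd_iff_le_factorization (hf i₀ hi₀)]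
      exact ((hp.pow_dvd_iff_le_factorization (hf i hi)).1 hij).trans (hmax hi)
  calc ∑ i ∈ (range k).erase i₀, (f i).factorization p
      = ∑ i ∈ (range k).erase i₀, #{j ∈ Ico 1 b | p ^ j ∣ f i} :=
        sum_congr rfl fun i hi => factorization_eq_card_pow_dvd_of_lt hp
          (Nat.pos_of_ne_zero (hf i (mem_of_mem_erase hi))) (hfb i (mem_of_mem_erase hi))
    _ = ∑ j ∈ Ico 1 b, #{i ∈ (range k).erase i₀ | p ^ j ∣ f i} := by
        simp only [card_filter]
        exact sum_comm
    _ ≤ ∑ j ∈ Ico 1 b, (k - 1) / p ^ j := sum_le_sum fun j _ => hfilter j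
    _ = (k - 1)!.factorization p := (factorization_factorial hp hkb).symm

theorem factorization_prod_pow_of_prime {s : Finset ℕ} (hs : ∀ p ∈ s, p.Prime) (e : ℕ → ℕ)
    (q : ℕ) : (∏ p ∈ s, p ^ e p).factorization q = if q ∈ s then e q else 0 := by
  rw [factorization_prod fun p hp => pow_ne_zero _ (hs p hp).ne_zero, Finsupp.finsetSum_apply,
    sum_congr rfl fun p hp => by rw [(hs p hp).factorization_pow, Finsupp.single_apply]]
  exact sum_ite_eq' s q e

theorem Prime.sum_factorization_add_mul_erase_le {p m d k i₀ : ℕ} (hp : p.Prime) (hm : 0 < m)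
    (hpd : ¬ p ∣ d) (hi₀ : i₀ ∈ range k)
    (hmax : IsMaxOn (fun i => (m + i * d).factorization p) (range k) i₀) :
    ∑ i ∈ (range k).erase i₀, (m + i * d).factorization p ≤ (k - 1)!.factorization p :=
  hp.sum_factorization_erase_le_factorization_factorial (fun i _ => by positivity)
    (fun j => card_filter_dvd_add_mul_le ((hp.coprime_iff_not_dvd.2 hpd).pow_left j) m k)
    hi₀ hmax

theorem exists_card_le_card_primeFactors_prod_sdiff_mul_dvd_factorial {m d k : ℕ} (hm : 0 < m)
    (hd : 0 < d) (hk : 0 < k) (hmd : m.Coprime d) :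
    ∃ S ⊆ range k, #S ≤ #(∏ i ∈ range k, (m + i * d)).primeFactors ∧
      (∏ i ∈ range k \ S, (m + i * d)) * ∏ p ∈ d.primeFactors, p ^ (k - 1)!.factorization p ∣
        (k - 1)! := by
  set Δ := ∏ i ∈ range k, (m + i * d)
  obtain ⟨S, hSk, hScard, hSmax⟩ := (range k).exists_subset_card_le_forall_isMaxOn
    (nonempty_range_iff.2 hk.ne') Δ.primeFactors fun p i => (m + i * d).factorization p
  refine ⟨S, hSk, hScard, ?_⟩
  have hterm : ∀ i, m + i * d ≠ 0 := fun i => by positivity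
  have hP : ∏ i ∈ range k \ S, (m + i * d) ≠ 0 := prod_ne_zero_iff.2 fun i _ => hterm i
  have hD : ∏ p ∈ d.primeFactors, p ^ (k - 1)!.factorization p ≠ 0 :=
    prod_ne_zero_iff.2 fun p hp => pow_ne_zero _ (prime_of_mem_primeFactors hp).ne_zero
  rw [← factorization_prime_le_iff_dvd (mul_ne_zero hP hD) (factorial_ne_zero _)]
  intro p hp
  rw [factorization_mul hP hD, Finsupp.add_apply, factorization_prod fun i _ => hterm i,
    Finsupp.finsetSum_apply, factorization_prod_pow_of_prime (fun _ => prime_of_mem_primeFactors)]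
  by_cases hpd : p ∈ d.primeFactors
  · have hcop : ∀ i, ¬ p ∣ m + i * d := fun i => hp.coprime_iff_not_dvd.1
      (((coprime_add_mul_right_left m d i).2 hmd).coprime_dvd_right
        (dvd_of_mem_primeFactors hpd)).symm
    simp [factorization_eq_zero_of_not_dvd (hcop _), hpd]
  rw [if_neg hpd, add_zero]
  by_cases hpΔ : p ∈ Δ.primeFactors
  · obtain ⟨i₀, hi₀S, hmax⟩ := hSmax p hpΔ
    calc ∑ i ∈ range k \ S, (m + i * d).factorization p
        ≤ ∑ i ∈ (range k).erase i₀, (m + i * d).factorization p :=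
          sum_le_sum_of_subset fun i hi =>
            mem_erase.2 ⟨fun h => (mem_sdiff.1 hi).2 (h ▸ hi₀S), (mem_sdiff.1 hi).1⟩
      _ ≤ (k - 1)!.factorization p := hp.sum_factorization_add_mul_erase_le hm
          (fun h => hpd (mem_primeFactors.2 ⟨hp, h, hd.ne'⟩)) (hSk hi₀S) hmax
  · have hΔ : Δ ≠ 0 := prod_ne_zero_iff.2 fun i _ => hterm i
    rw [sum_eq_zero fun i hi => factorization_eq_zero_of_not_dvd fun h =>
      hpΔ (mem_primeFactors.2 ⟨hp, h.trans (dvd_prod_of_mem _ (mem_sdiff.1 hi).1), hΔ⟩)]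
    exact Nat.zero_le _

end Nat

theorem stmt_5_general (m d k t : ℕ) (hm : 0 < m) (hd : 0 < d) (hk : 0 < k)
    (hgcd : Nat.gcd m d = 1) (htk : t < k)
    (hω : (∏ i ∈ Finset.range k, (m + i * d)).primeFactors.card ≤ t) :
    (m : ℝ) ^ (k - t) ≤
      (Nat.factorial (k - 1) : ℝ) *
        ∏ p ∈ d.primeFactors, (p : ℝ) ^ (-((Nat.factorial (k - 1)).factorization p : ℤ)) := by
  obtain ⟨S, hSk, hScard, hdvd⟩ :=
    Nat.exists_card_le_card_primeFactors_prod_sdiff_mul_dvd_factorial hm hd hk hgcd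
  set D := ∏ p ∈ d.primeFactors, p ^ (k - 1).factorial.factorization p
  have hbound : m ^ (k - t) * D ≤ (k - 1).factorial := by
    calc m ^ (k - t) * D ≤ m ^ #(range k \ S) * D := by
          gcongr
          rw [card_sdiff_of_subset hSk, card_range]
          omega
      _ ≤ (∏ i ∈ range k \ S, (m + i * d)) * D := by
          gcongr
          exact pow_card_le_prod _ _ _ fun i _ => Nat.le_add_right m (i * d)
      _ ≤ (k - 1).factorial := Nat.le_of_dvd (Nat.factorial_pos _) hdvd
  have hD : (0 : ℝ) < D := by
    exact_mod_cast Nat.pos_of_ne_zero (prod_ne_zero_iff.2 fun p hp =>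
      pow_ne_zero _ (Nat.prime_of_mem_primeFactors hp).ne_zero)
  have hprod : ∏ p ∈ d.primeFactors, (p : ℝ) ^ (-((k - 1).factorial.factorization p : ℤ)) =
      (D : ℝ)⁻¹ := by
    simp only [D, Nat.cast_prod, Nat.cast_pow, zpow_neg, zpow_natCast, prod_inv_distrib]
  rw [hprod, ← div_eq_mul_inv, le_div_iff₀ hD]
  exact_mod_cast hbound

theorem stmt_5 (m d k t : ℕ) (hm : 0 < m) (hd : 0 < d) (hk : 0 < k) (ht : 0 < t)
    (hgcd : Nat.gcd m d = 1) (hmk : m > k * d) (htk : t < k)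
    (hω : (∏ i ∈ Finset.range k, (m + i * d)).primeFactors.card ≤ t) :
    (m : ℝ) ^ (k - t) ≤
      (Nat.factorial (k - 1) : ℝ) *
        ∏ p ∈ d.primeFactors, (p : ℝ) ^ (-((Nat.factorial (k - 1)).factorization p : ℤ)) :=
  stmt_5_general m d k t hm hd hk hgcd htk hω
end

section
/- Let d ≥ 2, α with 1 ≤ α < d and gcd(α,d) = 1, and k ≥ 1. Let Δ_k = α(α+d)···(α+(k-1)d). If p is a prime with p > d and p ∤ Δ_k, then p > kd/(d-1). -/
/-!
Since `p ∤ d`, the progression `α + i d` hits every residue class mod `p` once for `0 ≤ i < p`,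
so some `α + i d = m p` with `i < p`. Then `m p < (i + 1) d ≤ p d` forces `m ≤ d - 1`, and
`i d < m p ≤ (d - 1) p` shows that `i < k` as soon as `(d - 1) p ≤ k d`, i.e. `p ∣ Δ_k`.
-/

theorem Nat.Prime.exists_lt_dvd_add_mul {p : ℕ} (hp : p.Prime) {d : ℕ} (hpd : ¬ p ∣ d) (a : ℕ) :
    ∃ i < p, p ∣ a + i * d := by
  have : Fact p.Prime := ⟨hp⟩
  have hd : (d : ZMod p) ≠ 0 := fun h => hpd ((ZMod.natCast_eq_zero_iff d p).mp h)
  set x : ZMod p := -a * (d : ZMod p)⁻¹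
  refine ⟨x.val, x.val_lt, (ZMod.natCast_eq_zero_iff _ p).mp ?_⟩
  rw [Nat.cast_add, Nat.cast_mul, ZMod.natCast_zmod_val, mul_assoc, inv_mul_cancel₀ hd]
  ring

theorem Nat.Prime.dvd_prod_range_add_mul {p a d k : ℕ} (hp : p.Prime) (ha : 0 < a) (had : a < d)
    (hpd : ¬ p ∣ d) (hpk : p * (d - 1) ≤ k * d) :
    p ∣ ∏ i ∈ Finset.range k, (a + i * d) := by
  obtain ⟨i, hip, m, hm⟩ := hp.exists_lt_dvd_add_mul hpd a
  have hmd : m ≤ d - 1 := by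
    have : p * m < p * d := by
      calc p * m = a + i * d := hm.symm
        _ < (i + 1) * d := by linarith
        _ ≤ p * d := Nat.mul_le_mul_right d hip
    have := Nat.lt_of_mul_lt_mul_left this
    omega
  have hik : i < k := by
    have : i * d < k * d :=
      calc i * d < a + i * d := by omega
        _ = p * m := hm
        _ ≤ p * (d - 1) := Nat.mul_le_mul_left p hmd
        _ ≤ k * d := hpk
    exact Nat.lt_of_mul_lt_mul_right this
  exact (Dvd.intro m hm.symm).trans (Finset.dvd_prod_of_mem _ (Finset.mem_range.mpr hik))

theorem stmt_9_general (d α k p : ℕ) (hα1 : 1 ≤ α) (hα2 : α < d)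
    (hp : p.Prime) (hpd : p > d)
    (hnd : ¬ p ∣ ∏ i ∈ Finset.range k, (α + i * d)) :
    (p : ℝ) > (k : ℝ) * d / ((d : ℝ) - 1) := by
  have hd : (1 : ℝ) < d := by exact_mod_cast hα1.trans_lt hα2
  rw [gt_iff_lt, div_lt_iff₀ (by linarith)]
  by_contra! hle
  have hpk : p * (d - 1) ≤ k * d := by
    rw [← Nat.cast_le (α := ℝ), Nat.cast_mul, Nat.cast_pred (by omega)]
    push_cast
    linarith
  exact hnd <| hp.dvd_prod_range_add_mul hα1 hα2
    (Nat.not_dvd_of_pos_of_lt (by omega) hpd) hpk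

theorem stmt_9 (d α k p : ℕ) (hd : 2 ≤ d) (hα1 : 1 ≤ α) (hα2 : α < d)
    (hgcd : Nat.gcd α d = 1) (hk : 1 ≤ k) (hp : p.Prime) (hpd : p > d)
    (hnd : ¬ p ∣ ∏ i ∈ Finset.range k, (α + i * d)) :
    (p : ℝ) > (k : ℝ) * d / ((d : ℝ) - 1) :=
  stmt_9_general d α k p hα1 hα2 hp hpd hnd
end

section
/- Let d ≥ 2, α with 1 ≤ α < d, gcd(α,d) = 1, and let p be a prime with p > d. Let j₀ be minimal with p | α + (j₀-1)d and set l₀ = (α+(j₀-1)d)/p. If j ≥ j₀ satisfies p | α + (j-1)d, then j = j₀ + p·s for some integer s ≥ 0, and ord_p(α(α+d)···(α+(j-1)d)) = s + 1 + ord_p(l₀(l₀+d)···(l₀+sd)). -/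
/-! Since `p ∤ d`, the terms `α + i * d` divisible by `p` are exactly those with
`i = (j₀ - 1) + p * r`, and `α + ((j₀ - 1) + p * r) * d = p * (l₀ + r * d)`. Each of the `s + 1`
such terms below `j` therefore contributes one factor `p` plus the valuation of `l₀ + r * d`,
while the remaining terms contribute nothing. -/

theorem Nat.Coprime.dvd_add_mul_iff_dvd_sub {p a d m n : ℕ} (hpd : Nat.Coprime p d)
    (hm : p ∣ a + m * d) (hmn : m ≤ n) : p ∣ a + n * d ↔ p ∣ n - m := by
  have hsplit : a + n * d = a + m * d + (n - m) * d := by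
    rw [add_assoc, ← add_mul, Nat.add_sub_cancel' hmn]
  rw [hsplit, Nat.dvd_add_right hm, hpd.dvd_mul_right]

theorem Nat.factorization_prod_apply_eq_sum_filter_dvd {ι : Type*} {s : Finset ι} {f : ι → ℕ}
    (hf : ∀ i ∈ s, f i ≠ 0) (p : ℕ) :
    (∏ i ∈ s, f i).factorization p = ∑ i ∈ s with p ∣ f i, (f i).factorization p := by
  rw [Nat.factorization_prod_apply hf, Finset.sum_filter_of_ne]
  exact fun i _ hi => by_contra fun hdvd => hi (Nat.factorization_eq_zero_of_not_dvd hdvd)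

theorem Nat.Prime.factorization_self_mul_apply {p m : ℕ} (hp : p.Prime) (hm : m ≠ 0) :
    (p * m).factorization p = 1 + m.factorization p := by
  rw [Nat.factorization_mul hp.ne_zero hm, Finsupp.add_apply, hp.factorization_self]

theorem filter_range_dvd_add_mul_eq_image {p a d b s : ℕ} (hp : 0 < p) (hpd : Nat.Coprime p d)
    (hb : p ∣ a + b * d) (hmin : ∀ i, p ∣ a + i * d → b ≤ i) :
    {i ∈ Finset.range (b + 1 + p * s) | p ∣ a + i * d} =
      (Finset.range (s + 1)).image (fun r => b + p * r) := by
  ext i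
  simp only [Finset.mem_filter, Finset.mem_range, Finset.mem_image]
  constructor
  · rintro ⟨hi, hdvd⟩
    have hbi := hmin i hdvd
    obtain ⟨r, hr⟩ := (hpd.dvd_add_mul_iff_dvd_sub hb hbi).1 hdvd
    refine ⟨r, ?_, by omega⟩
    by_contra! h
    have := Nat.mul_le_mul_left p h
    rw [Nat.mul_succ] at this
    omega
  · rintro ⟨r, hr, rfl⟩
    refine ⟨by nlinarith, (hpd.dvd_add_mul_iff_dvd_sub hb (by omega)).2 ?_⟩
    simp

theorem stmt_11_general (d α p j₀ l₀ j : ℕ) (hd : 2 ≤ d) (hα1 : 1 ≤ α)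
    (hp : p.Prime) (hpd : p > d)
    (hj₀pos : 0 < j₀) (hj₀div : p ∣ α + (j₀ - 1) * d)
    (hj₀min : ∀ j' : ℕ, 0 < j' → p ∣ α + (j' - 1) * d → j₀ ≤ j')
    (hl₀ : α + (j₀ - 1) * d = p * l₀)
    (hj : j₀ ≤ j) (hjdiv : p ∣ α + (j - 1) * d) :
    ∃ s : ℕ, j = j₀ + p * s ∧
      (∏ i ∈ Finset.range j, (α + i * d)).factorization p =
        s + 1 + (∏ r ∈ Finset.range (s + 1), (l₀ + r * d)).factorization p := by
  have hcop : Nat.Coprime p d := Nat.coprime_of_lt_prime (by omega) hpd hp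
  obtain ⟨s, hs⟩ : p ∣ j - j₀ := by
    have := (hcop.dvd_add_mul_iff_dvd_sub hj₀div (Nat.sub_le_sub_right hj 1)).1 hjdiv
    rwa [Nat.sub_sub_sub_cancel_right hj₀pos] at this
  refine ⟨s, by omega, ?_⟩
  have hmin : ∀ i, p ∣ α + i * d → j₀ - 1 ≤ i := fun i hi => by
    have := hj₀min (i + 1) i.succ_pos (by simpa using hi)
    omega
  have hl₀ne : l₀ ≠ 0 := by rintro rfl; omega
  have hterm (r : ℕ) : α + (j₀ - 1 + p * r) * d = p * (l₀ + r * d) := by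
    rw [add_mul, ← add_assoc, hl₀]; ring
  rw [show j = j₀ - 1 + 1 + p * s by omega,
    Nat.factorization_prod_apply_eq_sum_filter_dvd (fun i _ => by positivity),
    filter_range_dvd_add_mul_eq_image hp.pos hcop hj₀div hmin,
    Finset.sum_image fun _ _ _ _ h => Nat.eq_of_mul_eq_mul_left hp.pos (Nat.add_left_cancel h),
    Nat.factorization_prod_apply fun r _ => by positivity]
  simp only [hterm]
  rw [Finset.sum_congr rfl fun r _ => hp.factorization_self_mul_apply (by positivity),
    Finset.sum_add_distrib, Finset.sum_const, Finset.card_range, smul_eq_mul, mul_one]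

theorem stmt_11 (d α p j₀ l₀ j : ℕ) (hd : 2 ≤ d) (hα1 : 1 ≤ α) (hα2 : α < d)
    (hgcd : Nat.gcd α d = 1) (hp : p.Prime) (hpd : p > d)
    (hj₀pos : 0 < j₀) (hj₀div : p ∣ α + (j₀ - 1) * d)
    (hj₀min : ∀ j' : ℕ, 0 < j' → p ∣ α + (j' - 1) * d → j₀ ≤ j')
    (hl₀ : α + (j₀ - 1) * d = p * l₀)
    (hj : j₀ ≤ j) (hjdiv : p ∣ α + (j - 1) * d) :
    ∃ s : ℕ, j = j₀ + p * s ∧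
      (∏ i ∈ Finset.range j, (α + i * d)).factorization p =
        s + 1 + (∏ r ∈ Finset.range (s + 1), (l₀ + r * d)).factorization p :=
  stmt_11_general d α p j₀ l₀ j hd hα1 hp hpd hj₀pos hj₀div hj₀min hl₀ hj hjdiv
end

section
/- For k > 400, the inequality (138·4·e·2)^k < (138·4k)^{π(4k)} fails; more precisely, using the bound π(4k) ≤ (4k/log(4k))(1 + 1.2762/log(4k)), the inequality log(138·8·e) < (4·log(138·4k)/log(4k))·(1 + 1.2762/log(4k)) fails for all integers k ≥ 401. -/
/-!
Write `L = log (4k)`. Since `log (138 · 4k) = log 138 + L`, the right-hand side equals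
`4 (1 + log 138 / L) (1 + 1.2762 / L)`, which decreases in `L`. Bounding `log 138`, `L ≥ log 1604`
and `log 1104` by rational multiples of `log 2` (from `138⁵ ≤ 2³⁶`, `2⁷⁴ ≤ 1604⁷`, `2¹⁰ ≤ 1104`)
reduces the claim to a numerical inequality in `log 2`, settled by `log 2 > 0.6931471803`.
-/

open Real

lemma mul_log_le_mul_log_of_pow_le_pow {a b : ℝ} (ha : 0 < a) {m n : ℕ} (h : a ^ m ≤ b ^ n) :
    m * log a ≤ n * log b := by
  simpa only [Real.log_pow] using Real.log_le_log (pow_pos ha m) h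

lemma add_div_mul_one_add_div_le {a c c' x y : ℝ} (ha : 0 ≤ a) (hc : 0 ≤ c) (hcc' : c ≤ c')
    (hx : 0 < x) (hxy : x ≤ y) :
    (c + y) / y * (1 + a / y) ≤ (c' + x) / x * (1 + a / x) := by
  have hy : 0 < y := hx.trans_le hxy
  have hc' : 0 ≤ c' := hc.trans hcc'
  rw [add_div, add_div, div_self hy.ne', div_self hx.ne']
  gcongr

lemma mul_log_two_le_log_four_mul (k : ℕ) (hk : 401 ≤ k) : 74 / 7 * log 2 ≤ log (4 * k) := by
  have hk' : (1604 : ℝ) ≤ 4 * k := by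
    have : (401 : ℝ) ≤ k := by exact_mod_cast hk
    linarith
  have h := mul_log_le_mul_log_of_pow_le_pow (m := 74) (n := 7) two_pos
    (le_trans (by norm_num) (pow_le_pow_left₀ (by norm_num) hk' 7))
  push_cast at h
  linarith

lemma log_138_le : log 138 ≤ 36 / 5 * log 2 := by
  have h := mul_log_le_mul_log_of_pow_le_pow (a := 138) (b := 2) (m := 5) (n := 36)
    (by norm_num) (by norm_num)
  push_cast at h
  linarith

lemma mul_log_two_le_log_1104 : 10 * log 2 ≤ log 1104 := by
  have h := mul_log_le_mul_log_of_pow_le_pow (a := 2) (b := 1104) (m := 10) (n := 1)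
    two_pos (by norm_num)
  push_cast at h
  linarith

lemma four_mul_bound_le_of_log_two {t : ℝ} (ht : 0.6931471803 < t) :
    4 * ((36 / 5 * t + 74 / 7 * t) / (74 / 7 * t) * (1 + 1.2762 / (74 / 7 * t))) ≤ 10 * t + 1 := by
  have ht0 : 0 < t := by linarith
  have hratio : (36 / 5 * t + 74 / 7 * t) / (74 / 7 * t) = 311 / 185 := by
    field_simp
    ring
  have hcorr : 1.2762 / (74 / 7 * t) ≤ 1.2762 / (74 / 7 * 0.6931471803) := by gcongr
  rw [hratio]
  norm_num at hcorr ⊢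
  linarith

theorem stmt_14 (k : ℕ) (hk : 401 ≤ k) :
    ¬ (Real.log (138 * 8 * Real.exp 1) <
        4 * Real.log (138 * (4 * (k : ℝ))) / Real.log (4 * (k : ℝ)) *
          (1 + 1.2762 / Real.log (4 * (k : ℝ)))) := by
  have hk0 : (0 : ℝ) < 4 * k := by positivity
  have hL := mul_log_two_le_log_four_mul k hk
  rw [not_lt, Real.log_mul (by norm_num) (exp_ne_zero 1), log_exp,
    Real.log_mul (by norm_num) hk0.ne']
  calc 4 * (log 138 + log (4 * k)) / log (4 * k) * (1 + 1.2762 / log (4 * k))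
      = 4 * ((log 138 + log (4 * k)) / log (4 * k) * (1 + 1.2762 / log (4 * k))) := by ring
    _ ≤ 4 * ((36 / 5 * log 2 + 74 / 7 * log 2) / (74 / 7 * log 2) *
          (1 + 1.2762 / (74 / 7 * log 2))) := by
        gcongr 4 * ?_
        exact add_div_mul_one_add_div_le (a := 1.2762) (by norm_num) (log_nonneg (by norm_num))
          log_138_le (by positivity) hL
    _ ≤ 10 * log 2 + 1 := four_mul_bound_le_of_log_two log_two_gt_d9
    _ ≤ log (138 * 8) + 1 := by norm_num; linarith [mul_log_two_le_log_1104]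
end

section
/- Let α ∈ {1,3}, n ≥ 1, and let k with 1 ≤ k ≤ n/2. Suppose there exists a prime p with p > 4, p ≥ min(2k, 12), such that p divides ∏_{j=1}^{k}(α + (n-j)·4) but p does not divide ∏_{j=1}^{k}(α + (j-1)·4). Let a_0, ..., a_n be integers with a_n ≠ 0, a_0 ≠ 0, and all prime factors of |a_0·a_n| at most 2. Then the polynomial G(x) = a_n x^n + Σ_{j=0}^{n-1} a_j (∏_{i=j}^{n-1}(α + 4i)) x^j has no factor of degree k in ℤ[x]. -/
/-!
Write `ν = ν_p` and `S(t) = ν(α (α + 4) ⋯ (α + 4 (t - 1)))`, so that `ν(G_t) ≥ S(n) - S(t)`,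
with equality at `t = 0`. The multiples of `p` in a progression `β, β + d, β + 2d, …` with
`0 < β < d < p` are `p (m + d s)` for some `0 < m < d`, which gives a recursion for `S`;
together with `p ∤ α + 4 i` for `i < k` and `p ≥ min(2k, 12)` it yields `k S(t) < t` for
`t ≥ 1`. In Newton polygon terms, every point `(t, ν(G_t))` with `t > 0` lies strictly above
the line of slope `-1/k` through `(0, ν(G_0))`.

Now let `G = g h` with `deg g = k`. As `p ∤ a_n`, the leading coefficients of `g` and `h` are
prime to `p`. Since `p ∣ α + 4 i₀` for some `i₀ ≥ n - k`, `G ≡ 0 mod (p, X^{n-k+1})`, and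
`deg h = n - k` forces `p ∣ g(0)`. So the Newton polygon of `g` falls by at least `1` over a
length of `k`, too steep to be part of that of `G`. Newton polygons are compared through the
integer weights `a ν(f_i) + b i`, whose minimum over the support is additive on products.
-/

open Polynomial Finset

section ArithmeticProgression

lemma exists_least_dvd_add_mul {p d β : ℕ} (hp : p.Prime) (hdp : d < p) (hβ : 0 < β)
    (hβd : β < d) :
    ∃ q m, (∀ i < q, ¬ p ∣ β + d * i) ∧ β + d * q = m * p ∧ 0 < m ∧ m < d := by
  have hex : ∃ q, p ∣ β + d * q := by
    have := Fact.mk hp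
    have hd : (d : ZMod p) ≠ 0 := by
      rw [Ne, ZMod.natCast_eq_zero_iff]
      exact fun h => (Nat.le_of_dvd (by omega) h).not_gt hdp
    refine ⟨(-(β : ZMod p) / d).val, ?_⟩
    rw [← ZMod.natCast_eq_zero_iff]
    push_cast
    rw [ZMod.natCast_zmod_val, mul_div_cancel₀ _ hd, add_neg_cancel]
  classical
  have hq := Nat.find_spec hex
  have hqp : Nat.find hex < p := by
    by_contra! hle
    refine Nat.find_min hex (m := Nat.find hex - p) (by omega) ?_
    have : β + d * Nat.find hex = β + d * (Nat.find hex - p) + d * p := by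
      rw [add_assoc, ← mul_add, Nat.sub_add_cancel hle]
    rwa [this, Nat.dvd_add_left (dvd_mul_left p d)] at hq
  obtain ⟨m, hm⟩ := hq
  refine ⟨Nat.find hex, m, fun i hi => Nat.find_min hex hi, by rw [hm, mul_comm],
    Nat.pos_of_ne_zero ?_, by nlinarith⟩
  rintro rfl
  omega

lemma mul_add_lt_of_forall_not_dvd {p d β r : ℕ} (hp : p.Prime) (hdp : d < p) (hβ : 0 < β)
    (hβd : β < d) (hr : ∀ i < r, ¬ p ∣ β + d * i) : d * r + p < d * p := by
  obtain ⟨q, m, -, hm, -, hmd⟩ := exists_least_dvd_add_mul hp hdp hβ hβd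
  have hrq : r ≤ q := not_lt.1 fun h => hr q h ⟨m, by rw [hm, mul_comm]⟩
  nlinarith

def apValSum (p d β y : ℕ) : ℕ := ∑ i ∈ range y, padicValNat p (β + d * i)

lemma apValSum_mono (p d β : ℕ) : Monotone (apValSum p d β) := fun _ _ hxy =>
  sum_le_sum_of_subset (range_subset_range.2 hxy)

lemma apValSum_add_mul {p d β q m : ℕ} [Fact p.Prime] (hpd : ¬ p ∣ d)
    (hq : ∀ i < q, ¬ p ∣ β + d * i) (hm : β + d * q = m * p) (hm0 : 0 < m) (N : ℕ) :
    apValSum p d β (q + N * p) = N + apValSum p d m N := by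
  have hp : p.Prime := Fact.out
  induction N with
  | zero =>
    simp only [zero_mul, add_zero, apValSum, range_zero, sum_empty]
    exact sum_eq_zero fun i hi => padicValNat.eq_zero_of_not_dvd (hq i (mem_range.1 hi))
  | succ N ih =>
    have hblock : ∀ j, β + d * (q + N * p + j) = p * (m + d * N) + d * j := fun j => by
      rw [mul_add p, mul_comm p m, ← hm]
      ring
    -- among `p` consecutive terms only the first is divisible by `p`
    have hwindow : ∑ j ∈ range p, padicValNat p (β + d * (q + N * p + j))
        = 1 + padicValNat p (m + d * N) := by
      rw [sum_eq_single 0]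
      · rw [hblock, mul_zero, add_zero, padicValNat.mul hp.ne_zero (by omega), padicValNat_self]
      · intro j hj hj0
        refine padicValNat.eq_zero_of_not_dvd fun hdvd => ?_
        rw [hblock, Nat.dvd_add_right (dvd_mul_right p _)] at hdvd
        rcases hp.dvd_mul.1 hdvd with h | h
        · exact hpd h
        · exact hj0 (Nat.eq_zero_of_dvd_of_lt h (mem_range.1 hj))
      · exact fun h => absurd (mem_range.2 hp.pos) h
    rw [show q + (N + 1) * p = q + N * p + p by ring, apValSum, sum_range_add, ← apValSum, ih,
      hwindow]
    simp only [apValSum, sum_range_succ]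
    ring

theorem mul_apValSum_lt {p d : ℕ} (hp : p.Prime) (hdp : d < p) {y : ℕ} (hy : 0 < y) :
    ∀ {β r : ℕ}, 0 < β → β < d → (∀ i < r, ¬ p ∣ β + d * i) →
      r * (p / d + 1) ≤ p * (p / d) → r * apValSum p d β y < y := by
  have := Fact.mk hp
  induction y using Nat.strong_induction_on with
  | _ y ih =>
  intro β r hβ hβd hr hrp
  obtain ⟨q, m, hq, hm, hm0, hmd⟩ := exists_least_dvd_add_mul hp hdp hβ hβd
  have hrq : r ≤ q := not_lt.1 fun h => hr q h ⟨m, by rw [hm, mul_comm]⟩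
  set Q := p / d
  have hdQ : Q * d ≤ p := Nat.div_mul_le_self p d
  have hQ0 : 0 < Q := Nat.div_pos hdp.le (by omega)
  have hQq : Q ≤ q := Nat.lt_succ_iff.1 <| (Nat.div_lt_iff_lt_mul (by omega)).2 (by nlinarith)
  rcases le_or_gt y q with hyq | hqy
  · have : apValSum p d β y = 0 :=
      sum_eq_zero fun i hi => padicValNat.eq_zero_of_not_dvd (hq i (by simp at hi; omega))
    simpa [this] using hy
  have hdiv := Nat.div_mul_le_self (y - q - 1) p
  have hlt := Nat.lt_div_mul_add (a := y - q - 1) hp.pos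
  generalize (y - q - 1) / p = N at hdiv hlt
  have hNy : q + N * p < y := by omega
  have hyN : y ≤ q + (N + 1) * p := by rw [add_mul]; omega
  have hS : apValSum p d β y ≤ N + 1 + apValSum p d m (N + 1) :=
    (apValSum_mono p d β hyN).trans_eq
      (apValSum_add_mul (fun h => (Nat.le_of_dvd (by omega) h).not_gt hdp) hq hm hm0 _)
  -- as `m < d`, the terms `m + d i` with `i < p / d` lie strictly between `0` and `p`
  have hSm : Q * apValSum p d m (N + 1) < N + 1 := by
    refine ih (N + 1) (by nlinarith) (by omega) hm0 hmd (fun i hi => ?_) ?_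
    · exact Nat.not_dvd_of_pos_of_lt (by omega) (by nlinarith)
    · rw [mul_comm p]
      exact Nat.mul_le_mul_left Q (Nat.div_lt_self hp.pos (by omega))
  refine Nat.lt_of_mul_lt_mul_left (a := Q) ?_
  calc Q * (r * apValSum p d β y)
      ≤ Q * r * (N + 1) + r * (Q * apValSum p d m (N + 1)) := by
        have := Nat.mul_le_mul_left (Q * r) hS
        nlinarith
    _ ≤ Q * r + N * (r * (Q + 1)) := by
        have := Nat.mul_le_mul_left r (Nat.lt_succ_iff.1 hSm)
        nlinarith
    _ ≤ Q * r + N * (p * Q) := by gcongr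
    _ ≤ Q * (q + N * p) := by nlinarith
    _ < Q * y := Nat.mul_lt_mul_of_pos_left hNy hQ0

lemma mul_div_four_add_one_le {p k : ℕ} (hp4 : 4 < p) (hpk : min (2 * k) 12 ≤ p)
    (hkp : 4 * k + p < 4 * p) : k * (p / 4 + 1) ≤ p * (p / 4) := by
  have h4 := Nat.div_add_mod p 4
  have h4' := Nat.mod_lt p (show 0 < 4 by norm_num)
  generalize p / 4 = Q at h4 ⊢
  rcases le_or_gt (2 * k) p with h2k | h2k
  · have hQ : 1 ≤ Q := by omega
    nlinarith [Nat.mul_le_mul_right Q h2k, Nat.mul_le_mul_left k hQ]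
  · have hQ : 3 ≤ Q := by omega
    nlinarith [Nat.mul_lt_mul_of_pos_right hkp (Nat.succ_pos Q), Nat.mul_le_mul_left p hQ]

end ArithmeticProgression

lemma Finset.exists_mem_forall_le_and_lt {ι κ : Type*} [LinearOrder ι] [LinearOrder κ]
    {s : Finset ι} (hs : s.Nonempty) (w : ι → κ) :
    ∃ i ∈ s, ∀ j ∈ s, w i ≤ w j ∧ (i < j → w i < w j) := by
  obtain ⟨i, hi, hmin⟩ := s.exists_min_image (fun j => toLex (w j, OrderDual.toDual j)) hs
  refine ⟨i, hi, fun j hj => ?_⟩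
  rcases Prod.Lex.toLex_le_toLex.1 (hmin j hj) with hlt | ⟨heq, hji⟩
  · exact ⟨hlt.le, fun _ => hlt⟩
  · exact ⟨heq.le, fun hij => absurd (OrderDual.toDual_le_toDual.1 hji) (not_le.2 hij)⟩

namespace Polynomial

lemma X_dvd_of_X_pow_dvd_mul {R : Type*} [CommRing R] [IsDomain R] {g h : R[X]} {s : ℕ}
    (hh : h ≠ 0) (hs : h.natDegree < s) (hgh : X ^ s ∣ g * h) : X ∣ g := by
  by_contra hg
  have := natDegree_le_of_dvd (prime_X.pow_dvd_of_dvd_mul_left s hg hgh) hh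
  rw [natDegree_X_pow] at this
  omega

variable {p : ℕ} [Fact p.Prime]

lemma dvd_coeff_zero_of_dvd_coeff_mul {g h : ℤ[X]} (hh : ¬ (p : ℤ) ∣ h.leadingCoeff)
    (hgh : ∀ t ≤ h.natDegree, (p : ℤ) ∣ (g * h).coeff t) : (p : ℤ) ∣ g.coeff 0 := by
  have hh' : h.map (Int.castRingHom (ZMod p)) ≠ 0 := by
    intro h0
    apply hh
    rw [← ZMod.intCast_zmod_eq_zero_iff_dvd]
    simpa using congrArg (coeff · h.natDegree) h0
  have hX : X ^ (h.natDegree + 1) ∣ (g * h).map (Int.castRingHom (ZMod p)) := by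
    rw [X_pow_dvd_iff]
    intro t ht
    rw [coeff_map, eq_intCast, ZMod.intCast_zmod_eq_zero_iff_dvd]
    exact hgh t (by omega)
  rw [Polynomial.map_mul] at hX
  have := X_dvd_of_X_pow_dvd_mul hh' (natDegree_map_le.trans_lt (Nat.lt_succ_self _)) hX
  rw [X_dvd_iff, coeff_map] at this
  exact (ZMod.intCast_zmod_eq_zero_iff_dvd _ _).1 this

def padicWeight (p a b : ℕ) (f : ℤ[X]) (i : ℕ) : ℕ := a * padicValInt p (f.coeff i) + b * i

theorem exists_mem_support_padicWeight_mul_le (a b : ℕ) {g h : ℤ[X]} (hg : g ≠ 0)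
    (hh : h ≠ 0) :
    ∃ t ∈ (g * h).support, ∀ i ∈ g.support, ∀ j ∈ h.support,
      padicWeight p a b (g * h) t ≤ padicWeight p a b g i + padicWeight p a b h j := by
  obtain ⟨i₀, hi₀, hg₀⟩ :=
    exists_mem_forall_le_and_lt (support_nonempty.2 hg) (padicWeight p a b g)
  obtain ⟨j₀, hj₀, hh₀⟩ :=
    exists_mem_forall_le_and_lt (support_nonempty.2 hh) (padicWeight p a b h)
  rw [mem_support_iff] at hi₀ hj₀
  set V := padicValInt p (g.coeff i₀) + padicValInt p (h.coeff j₀)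
  have hmain : ¬ (p : ℤ) ^ (V + 1) ∣ g.coeff i₀ * h.coeff j₀ := by
    rw [padicValInt_dvd_iff, padicValInt.mul hi₀ hj₀]
    push Not
    exact ⟨mul_ne_zero hi₀ hj₀, Nat.lt_succ_self V⟩
  -- `i₀`, `j₀` are the largest minimisers, so every other term of `(g * h).coeff (i₀ + j₀)`
  -- has strictly larger weight
  have hrest : ∀ x ∈ antidiagonal (i₀ + j₀), x ≠ (i₀, j₀) →
      (p : ℤ) ^ (V + 1) ∣ g.coeff x.1 * h.coeff x.2 := by
    rintro ⟨i, j⟩ hx hne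
    rw [HasAntidiagonal.mem_antidiagonal] at hx
    by_cases hgi : g.coeff i = 0
    · simp [hgi]
    by_cases hhj : h.coeff j = 0
    · simp [hhj]
    have hlt : padicWeight p a b g i₀ + padicWeight p a b h j₀
        < padicWeight p a b g i + padicWeight p a b h j := by
      have := hg₀ i (mem_support_iff.2 hgi)
      have := hh₀ j (mem_support_iff.2 hhj)
      have : i₀ < i ∨ j₀ < j := by
        by_contra! hle
        exact hne (Prod.ext (by omega) (by omega))
      omega
    have hb : b * i + b * j = b * i₀ + b * j₀ := by rw [← mul_add, ← mul_add, hx]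
    simp only [padicWeight] at hlt
    rw [padicValInt_dvd_iff, padicValInt.mul hgi hhj]
    refine Or.inr (Nat.lt_of_mul_lt_mul_left (a := a) ?_)
    rw [mul_add, mul_add]
    omega
  have hcoeff : ¬ (p : ℤ) ^ (V + 1) ∣ (g * h).coeff (i₀ + j₀) := by
    have hmem : (i₀, j₀) ∈ antidiagonal (i₀ + j₀) :=
      HasAntidiagonal.mem_antidiagonal.2 rfl
    rw [coeff_mul, ← add_sum_erase _ _ hmem,
      dvd_add_left (dvd_sum fun x hx => hrest x (mem_of_mem_erase hx) (ne_of_mem_erase hx))]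
    exact hmain
  have hne : (g * h).coeff (i₀ + j₀) ≠ 0 := fun h0 => hcoeff (h0 ▸ dvd_zero _)
  have hval : padicValInt p ((g * h).coeff (i₀ + j₀)) ≤ V := by
    rw [padicValInt_dvd_iff] at hcoeff
    push Not at hcoeff
    exact Nat.lt_succ_iff.1 hcoeff.2
  refine ⟨i₀ + j₀, mem_support_iff.2 hne, fun i hi j hj => ?_⟩
  calc padicWeight p a b (g * h) (i₀ + j₀)
      ≤ padicWeight p a b g i₀ + padicWeight p a b h j₀ := by
        simp only [padicWeight]
        have := Nat.mul_le_mul_left a hval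
        rw [mul_add] at this
        rw [mul_add b]
        omega
    _ ≤ padicWeight p a b g i + padicWeight p a b h j := add_le_add (hg₀ i hi).1 (hh₀ j hj).1

theorem not_dvd_of_padicWeight {k : ℕ} (hk : 0 < k) {F g : ℤ[X]} (hF0 : F.coeff 0 ≠ 0)
    (hF : ∀ t ∈ F.support, 0 < t → padicWeight p k 1 F 0 < padicWeight p k 1 F t)
    (hgk : g.natDegree ≤ k) (hlead : ¬ (p : ℤ) ∣ g.leadingCoeff)
    (hg0 : (p : ℤ) ∣ g.coeff 0) :
    ¬ g ∣ F := by
  rintro ⟨h, rfl⟩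
  set N := (g * h).natDegree
  rw [mul_coeff_zero] at hF0
  have hg00 : g.coeff 0 ≠ 0 := left_ne_zero_of_mul hF0
  have hh00 : h.coeff 0 ≠ 0 := right_ne_zero_of_mul hF0
  have hg : g ≠ 0 := fun h0 => hg00 (by simp [h0])
  have hh : h ≠ 0 := fun h0 => hh00 (by simp [h0])
  -- for the tilted weight `(N + 1) k ν + N i` the minimum over `g * h` is still attained at `0`,
  -- while for `g` the leading term undercuts the constant term
  obtain ⟨t, ht, hle⟩ := exists_mem_support_padicWeight_mul_le (p := p) ((N + 1) * k) N hg hh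
  have hgh := hle g.natDegree (natDegree_mem_support_of_nonzero hg) 0 (mem_support_iff.2 hh00)
  have hlead0 : padicValInt p g.leadingCoeff = 0 := padicValInt.eq_zero_of_not_dvd hlead
  have hg0' : 1 ≤ padicValInt p (g.coeff 0) := by
    rw [← pow_one (p : ℤ), padicValInt_dvd_iff] at hg0
    tauto
  have hF0' : padicValInt p ((g * h).coeff 0)
      = padicValInt p (g.coeff 0) + padicValInt p (h.coeff 0) := by
    rw [mul_coeff_zero, padicValInt.mul hg00 hh00]
  have htilt : (N + 1) * k * padicValInt p ((g * h).coeff 0)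
      ≤ padicWeight p ((N + 1) * k) N (g * h) t := by
    rcases Nat.eq_zero_or_pos t with rfl | htpos
    · simp [padicWeight]
    have := hF t ht htpos
    have htN : t ≤ N := le_natDegree_of_mem_supp t ht
    simp only [padicWeight] at this ⊢
    nlinarith
  simp only [padicWeight, leadingCoeff] at hgh htilt hlead0
  rw [hlead0] at hgh
  rw [hF0'] at htilt
  nlinarith [Nat.mul_le_mul_left ((N + 1) * k) hg0', Nat.mul_le_mul_left N hgk]

theorem natDegree_ne_of_dvd {k : ℕ} (hk : 0 < k) {F : ℤ[X]}
    (hlead : ¬ (p : ℤ) ∣ F.leadingCoeff)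
    (hlow : ∀ t ≤ F.natDegree - k, (p : ℤ) ∣ F.coeff t) (hF0 : F.coeff 0 ≠ 0)
    (hF : ∀ t ∈ F.support, 0 < t → padicWeight p k 1 F 0 < padicWeight p k 1 F t)
    {g : ℤ[X]} (hg : g ∣ F) : g.natDegree ≠ k := by
  intro hgk
  obtain ⟨h, rfl⟩ := hg
  have hgh : g * h ≠ 0 := fun h0 => hF0 (by simp [h0])
  rw [leadingCoeff_mul] at hlead
  have hdeg : h.natDegree = (g * h).natDegree - k := by
    rw [natDegree_mul (left_ne_zero_of_mul hgh) (right_ne_zero_of_mul hgh)]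
    omega
  exact not_dvd_of_padicWeight hk hF0 hF hgk.le (fun hd => hlead (hd.mul_right _))
    (dvd_coeff_zero_of_dvd_coeff_mul (fun hd => hlead (hd.mul_left _))
      fun t ht => hlow t (hdeg ▸ ht)) (dvd_mul_right g h)

end Polynomial

noncomputable def hermiteLaguerre (α n : ℕ) (a : ℕ → ℤ) : ℤ[X] :=
  C (a n) * X ^ n +
    ∑ j ∈ range n, C (a j * ∏ i ∈ Icc j (n - 1), ((α : ℤ) + 4 * i)) * X ^ j

section hermiteLaguerre

variable {α n : ℕ} {a : ℕ → ℤ}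

lemma coeff_hermiteLaguerre {t : ℕ} (ht : t ≤ n) :
    (hermiteLaguerre α n a).coeff t = a t * ((∏ i ∈ Ico t n, (α + 4 * i) : ℕ) : ℤ) := by
  simp only [hermiteLaguerre, coeff_add, coeff_C_mul_X_pow, finsetSum_coeff]
  rcases ht.lt_or_eq with ht | rfl
  · have : Icc t (n - 1) = Ico t n := by ext; simp; omega
    simp [ht.ne, ht, this]
  · simp

lemma coeff_hermiteLaguerre_of_lt {t : ℕ} (ht : n < t) :
    (hermiteLaguerre α n a).coeff t = 0 := by
  simp only [hermiteLaguerre, coeff_add, coeff_C_mul_X_pow, finsetSum_coeff]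
  simp [ht.ne', ht.not_gt]

lemma coeff_hermiteLaguerre_ne_zero (hα : 0 < α) {t : ℕ} (ht : t ≤ n) :
    (hermiteLaguerre α n a).coeff t ≠ 0 ↔ a t ≠ 0 := by
  have : ∏ i ∈ Ico t n, (α + 4 * i) ≠ 0 := prod_ne_zero_iff.2 fun i _ => by omega
  rw [coeff_hermiteLaguerre ht, mul_ne_zero_iff_right (Nat.cast_ne_zero.2 this)]

lemma natDegree_hermiteLaguerre (han : a n ≠ 0) : (hermiteLaguerre α n a).natDegree = n :=
  natDegree_eq_of_le_of_coeff_ne_zero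
    (natDegree_le_iff_coeff_eq_zero.2 fun _ ht => coeff_hermiteLaguerre_of_lt ht)
    (by simpa [coeff_hermiteLaguerre le_rfl] using han)

lemma leadingCoeff_hermiteLaguerre (han : a n ≠ 0) :
    (hermiteLaguerre α n a).leadingCoeff = a n := by
  simp [leadingCoeff, natDegree_hermiteLaguerre han, coeff_hermiteLaguerre le_rfl]

lemma dvd_coeff_hermiteLaguerre {p i t : ℕ} (hi : i < n) (hpi : p ∣ α + 4 * i) (ht : t ≤ i) :
    (p : ℤ) ∣ (hermiteLaguerre α n a).coeff t := by
  rw [coeff_hermiteLaguerre (by omega)]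
  exact Dvd.dvd.mul_left (Int.natCast_dvd_natCast.2
    (hpi.trans (dvd_prod_of_mem (fun i => α + 4 * i) (mem_Ico.2 ⟨ht, hi⟩)))) _

lemma padicValInt_coeff_hermiteLaguerre_add {p : ℕ} [Fact p.Prime] (hα : 0 < α) {t : ℕ}
    (ht : t ≤ n) (hat : a t ≠ 0) :
    padicValInt p ((hermiteLaguerre α n a).coeff t) + apValSum p 4 α t
      = padicValInt p (a t) + apValSum p 4 α n := by
  have hprod : ∀ i ∈ Ico t n, α + 4 * i ≠ 0 := fun i _ => by omega
  rw [coeff_hermiteLaguerre ht, padicValInt.mul hat (Nat.cast_ne_zero.2 (prod_ne_zero_iff.2 hprod)),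
    padicValInt.of_nat, ← Nat.factorization_def _ Fact.out, Nat.factorization_prod hprod,
    Finsupp.finsetSum_apply, apValSum, apValSum, ← sum_range_add_sum_Ico _ ht]
  simp only [Nat.factorization_def _ (Fact.out : p.Prime)]
  ring

lemma padicWeight_hermiteLaguerre_zero_lt {p k : ℕ} [Fact p.Prime] (hα : 0 < α)
    (hpa0 : ¬ (p : ℤ) ∣ a 0) (hk : ∀ t, 0 < t → k * apValSum p 4 α t < t) :
    ∀ t ∈ (hermiteLaguerre α n a).support, 0 < t →
      padicWeight p k 1 (hermiteLaguerre α n a) 0 <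
        padicWeight p k 1 (hermiteLaguerre α n a) t := by
  intro t ht htpos
  have htn : t ≤ n := not_lt.1 fun h => mem_support_iff.1 ht (coeff_hermiteLaguerre_of_lt h)
  have hν0 : padicValInt p ((hermiteLaguerre α n a).coeff 0) = apValSum p 4 α n := by
    have := padicValInt_coeff_hermiteLaguerre_add (p := p) hα (Nat.zero_le n)
      fun h : a 0 = 0 => hpa0 (h ▸ dvd_zero _)
    rwa [show apValSum p 4 α 0 = 0 from sum_range_zero _,
      padicValInt.eq_zero_of_not_dvd hpa0, add_zero, zero_add] at this
  have hνt := padicValInt_coeff_hermiteLaguerre_add (p := p) hα htn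
    ((coeff_hermiteLaguerre_ne_zero hα htn).1 (mem_support_iff.1 ht))
  have hle := Nat.mul_le_mul_left k (show apValSum p 4 α n ≤
    padicValInt p ((hermiteLaguerre α n a).coeff t) + apValSum p 4 α t by omega)
  have := hk t htpos
  simp only [padicWeight, hν0]
  rw [mul_add] at hle
  omega

end hermiteLaguerre

open Polynomial in
theorem stmt_15_general (α n k : ℕ) (hα : α = 1 ∨ α = 3) (p : ℕ) (hp : p.Prime) (hp4 : p > 4)
    (hpmin : p ≥ min (2 * k) 12)
    (hdiv : p ∣ ∏ j ∈ Finset.Icc 1 k, (α + (n - j) * 4))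
    (hndiv : ¬ p ∣ ∏ j ∈ Finset.Icc 1 k, (α + (j - 1) * 4))
    (a : ℕ → ℤ)
    (ha : ∀ q : ℕ, q.Prime → (q : ℤ) ∣ a 0 * a n → q ≤ 2) :
    ¬ ∃ g : Polynomial ℤ,
        g ∣ (C (a n) * X ^ n +
          ∑ j ∈ Finset.range n,
            C (a j * ∏ i ∈ Finset.Icc j (n - 1), ((α : ℤ) + 4 * i)) * X ^ j) ∧
        g.natDegree = k := by
  rintro ⟨g, hgG, hgk⟩
  have := Fact.mk hp
  have hα0 : 0 < α := by omega
  have hα4 : α < 4 := by omega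
  have hpa0 : ¬ (p : ℤ) ∣ a 0 := fun h => by have := ha p hp (h.mul_right _); omega
  have hpan : ¬ (p : ℤ) ∣ a n := fun h => by have := ha p hp (h.mul_left _); omega
  have han : a n ≠ 0 := fun h => hpan (h ▸ dvd_zero _)
  have hG : hermiteLaguerre α n a ≠ 0 :=
    leadingCoeff_ne_zero.1 (by rwa [leadingCoeff_hermiteLaguerre han])
  have hkn : k ≤ n :=
    hgk ▸ (natDegree_le_of_dvd hgG hG).trans_eq (natDegree_hermiteLaguerre han)
  obtain ⟨j, hj, hpj⟩ := hp.prime.exists_mem_finset_dvd hdiv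
  rw [mem_Icc] at hj
  rw [mul_comm] at hpj
  have hndvd : ∀ i < k, ¬ p ∣ α + 4 * i := fun i hi h => hndiv <|
    (show p ∣ α + (i + 1 - 1) * 4 by rwa [Nat.add_sub_cancel, mul_comm]).trans
      (dvd_prod_of_mem (fun j => α + (j - 1) * 4) (mem_Icc.2 ⟨Nat.le_add_left 1 i, hi⟩))
  have hS : ∀ t, 0 < t → k * apValSum p 4 α t < t := fun t ht =>
    mul_apValSum_lt hp hp4 ht hα0 hα4 hndvd <| mul_div_four_add_one_le hp4 hpmin <|
      mul_add_lt_of_forall_not_dvd hp hp4 hα0 hα4 hndvd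
  refine natDegree_ne_of_dvd (by omega) ?_ ?_ ?_
    (padicWeight_hermiteLaguerre_zero_lt hα0 hpa0 hS) hgG hgk
  · rwa [leadingCoeff_hermiteLaguerre han]
  · rw [natDegree_hermiteLaguerre han]
    exact fun t ht => dvd_coeff_hermiteLaguerre (i := n - j) (by omega) hpj (by omega)
  · exact (coeff_hermiteLaguerre_ne_zero hα0 (Nat.zero_le n)).2 fun h => hpa0 (h ▸ dvd_zero _)

open Polynomial in
theorem stmt_15 (α n k : ℕ) (hα : α = 1 ∨ α = 3) (hn : 1 ≤ n) (hk : 1 ≤ k)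
    (hkn : 2 * k ≤ n) (p : ℕ) (hp : p.Prime) (hp4 : p > 4) (hpmin : p ≥ min (2 * k) 12)
    (hdiv : p ∣ ∏ j ∈ Finset.Icc 1 k, (α + (n - j) * 4))
    (hndiv : ¬ p ∣ ∏ j ∈ Finset.Icc 1 k, (α + (j - 1) * 4))
    (a : ℕ → ℤ) (han : a n ≠ 0) (ha0 : a 0 ≠ 0)
    (ha : ∀ q : ℕ, q.Prime → (q : ℤ) ∣ a 0 * a n → q ≤ 2) :
    ¬ ∃ g : Polynomial ℤ,
        g ∣ (C (a n) * X ^ n +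
          ∑ j ∈ Finset.range n,
            C (a j * ∏ i ∈ Finset.Icc j (n - 1), ((α : ℤ) + 4 * i)) * X ^ j) ∧
        g.natDegree = k :=
  stmt_15_general α n k hα p hp hp4 hpmin hdiv hndiv a ha
end

section
/- Let p be a prime, d ≥ 2 with p ≥ d+1, and let l₀, s be integers with 1 ≤ l₀ ≤ d-1 and s ≥ p. Then ord_p(l₀(l₀+d)(l₀+2d)···(l₀+sd)) ≤ ord_p(l₀ + r₀d) + ord_p(s!) ≤ log(l₀+sd)/log p + s/(p-1), where r₀ is an index with 0 ≤ r₀ ≤ s at which ord_p(l₀+rd) is maximal. -/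
/-!
If `p ∤ d` and `p ^ k` divides two terms `a + r d` and `a + r₀ d` of an arithmetic progression,
then `p ^ k ∣ |r - r₀|`. Hence, once `r₀` is a term of maximal valuation, every other term has
valuation at most `v_p |r - r₀|`, and `∏_{r ≠ r₀} |r - r₀| = r₀! (s - r₀)!` divides
`s!`. The real bounds come from `p ^ v_p n ≤ n` and Legendre's `v_p(s!) ≤ s / (p - 1)`.
-/

open Finset

namespace Nat

theorem factorization_le_factorization_dist {p a d r r₀ : ℕ} (hp : p.Prime) (hpd : ¬p ∣ d)
    (hr : r ≠ r₀) (hle : (a + r * d).factorization p ≤ (a + r₀ * d).factorization p) :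
    (a + r * d).factorization p ≤ (Nat.dist r r₀).factorization p := by
  set k := (a + r * d).factorization p
  have hdvd_r : p ^ k ∣ a + r * d := ordProj_dvd _ _
  have hdvd_r₀ : p ^ k ∣ a + r₀ * d := (Nat.pow_dvd_pow p hle).trans (ordProj_dvd _ _)
  have hdvd_dist_mul : p ^ k ∣ Nat.dist r r₀ * d := by
    rw [← dist_mul_right, ← dist_add_add_left a]
    exact Nat.dvd_add (Nat.dvd_sub hdvd_r hdvd_r₀) (Nat.dvd_sub hdvd_r₀ hdvd_r)
  have hdvd_dist : p ^ k ∣ Nat.dist r r₀ :=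
    (((hp.coprime_iff_not_dvd).2 hpd).pow_left k).dvd_of_dvd_mul_right hdvd_dist_mul
  exact (hp.pow_dvd_iff_le_factorization fun h => hr (eq_of_dist_eq_zero h)).1 hdvd_dist

theorem prod_erase_dist_eq {s r₀ : ℕ} (h : r₀ ≤ s) :
    ∏ r ∈ (range (s + 1)).erase r₀, Nat.dist r r₀ = r₀ ! * (s - r₀)! := by
  have hsplit : (range (s + 1)).erase r₀ = range r₀ ∪ Ico (r₀ + 1) (s + 1) := by
    ext x
    simp only [mem_erase, mem_range, mem_union, mem_Ico]
    omega
  have hdisj : Disjoint (range r₀) (Ico (r₀ + 1) (s + 1)) := by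
    simp only [disjoint_left, mem_range, mem_Ico]
    omega
  rw [hsplit, prod_union hdisj]
  congr 1
  · rw [← prod_range_add_one_eq_factorial, ← prod_range_reflect]
    refine prod_congr rfl fun x hx => ?_
    rw [mem_range] at hx
    rw [dist_eq_sub_of_le (by omega)]
    omega
  · rw [← prod_range_add_one_eq_factorial, prod_Ico_eq_prod_range,
      show s + 1 - (r₀ + 1) = s - r₀ by omega]
    refine prod_congr rfl fun x _ => ?_
    rw [dist_eq_sub_of_le_right (by omega)]
    omega

theorem factorization_prod_arithProg_le {p a d s r₀ : ℕ} (hp : p.Prime) (hpd : ¬p ∣ d)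
    (hr₀ : r₀ ≤ s)
    (hmax : ∀ r ≤ s, (a + r * d).factorization p ≤ (a + r₀ * d).factorization p) :
    (∏ r ∈ range (s + 1), (a + r * d)).factorization p ≤
      (a + r₀ * d).factorization p + (s !).factorization p := by
  rcases eq_or_ne (∏ r ∈ range (s + 1), (a + r * d)) 0 with hzero | hne
  · simp [hzero]
  have hr₀_mem : r₀ ∈ range (s + 1) := mem_range.2 (by omega)
  have hdist_ne : ∀ r ∈ (range (s + 1)).erase r₀, Nat.dist r r₀ ≠ 0 :=
    fun r hr h => (mem_erase.1 hr).1 (eq_of_dist_eq_zero h)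
  rw [factorization_prod_apply (prod_ne_zero_iff.1 hne), ← add_sum_erase _ _ hr₀_mem]
  gcongr
  calc ∑ r ∈ (range (s + 1)).erase r₀, (a + r * d).factorization p
      ≤ ∑ r ∈ (range (s + 1)).erase r₀, (Nat.dist r r₀).factorization p := by
        refine sum_le_sum fun r hr => ?_
        obtain ⟨hr_ne, hr_mem⟩ := mem_erase.1 hr
        exact factorization_le_factorization_dist hp hpd hr_ne
          (hmax r (mem_range_succ_iff.1 hr_mem))
    _ = (∏ r ∈ (range (s + 1)).erase r₀, Nat.dist r r₀).factorization p :=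
        (factorization_prod_apply hdist_ne).symm
    _ ≤ (s !).factorization p := by
        rw [prod_erase_dist_eq hr₀]
        exact (factorization_le_iff_dvd (by positivity) (factorial_ne_zero s)).2
          (factorial_mul_factorial_dvd_factorial hr₀) p

theorem factorization_le_log_div_log {p n m : ℕ} (hp : p.Prime) (h : n ≤ m) :
    (n.factorization p : ℝ) ≤ Real.log m / Real.log p := by
  rw [factorization_def n hp, Real.log_div_log]
  calc (padicValNat p n : ℝ) ≤ Nat.log p m := by
        exact_mod_cast (padicValNat_le_nat_log n).trans (log_mono_right h)
    _ ≤ Real.logb p m := Real.natLog_le_logb m p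

theorem factorization_factorial_le_div_sub_one {p : ℕ} (hp : p.Prime) (s : ℕ) :
    ((s !).factorization p : ℝ) ≤ s / ((p : ℝ) - 1) := by
  calc ((s !).factorization p : ℝ) ≤ ((s / (p - 1) : ℕ) : ℝ) := by
        exact_mod_cast factorization_factorial_le_div_pred hp s
    _ ≤ s / ((p - 1 : ℕ) : ℝ) := cast_div_le
    _ = s / ((p : ℝ) - 1) := by rw [cast_sub hp.one_le, cast_one]

end Nat

theorem stmt_19_general (p d l₀ s r₀ : ℕ) (hp : p.Prime) (hd : 2 ≤ d) (hpd : p ≥ d + 1)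
    (hr₀ : r₀ ≤ s)
    (hmax : ∀ r : ℕ, r ≤ s →
      (l₀ + r * d).factorization p ≤ (l₀ + r₀ * d).factorization p) :
    (∏ r ∈ Finset.range (s + 1), (l₀ + r * d)).factorization p ≤
        (l₀ + r₀ * d).factorization p + (Nat.factorial s).factorization p ∧
      ((l₀ + r₀ * d).factorization p : ℝ) + ((Nat.factorial s).factorization p : ℝ) ≤
        Real.log ((l₀ : ℝ) + s * d) / Real.log p + (s : ℝ) / ((p : ℝ) - 1) := by
  have hp_not_dvd : ¬p ∣ d := Nat.not_dvd_of_pos_of_lt (by omega) (by omega)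
  refine ⟨Nat.factorization_prod_arithProg_le hp hp_not_dvd hr₀ hmax, add_le_add ?_ ?_⟩
  · have hterm : l₀ + r₀ * d ≤ l₀ + s * d := by gcongr
    exact_mod_cast Nat.factorization_le_log_div_log hp hterm
  · exact Nat.factorization_factorial_le_div_sub_one hp s

theorem stmt_19 (p d l₀ s r₀ : ℕ) (hp : p.Prime) (hd : 2 ≤ d) (hpd : p ≥ d + 1)
    (hl₀ : 1 ≤ l₀) (hl₀' : l₀ ≤ d - 1) (hs : s ≥ p) (hr₀ : r₀ ≤ s)
    (hmax : ∀ r : ℕ, r ≤ s →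
      (l₀ + r * d).factorization p ≤ (l₀ + r₀ * d).factorization p) :
    (∏ r ∈ Finset.range (s + 1), (l₀ + r * d)).factorization p ≤
        (l₀ + r₀ * d).factorization p + (Nat.factorial s).factorization p ∧
      ((l₀ + r₀ * d).factorization p : ℝ) + ((Nat.factorial s).factorization p : ℝ) ≤
        Real.log ((l₀ : ℝ) + s * d) / Real.log p + (s : ℝ) / ((p : ℝ) - 1) :=
  stmt_19_general p d l₀ s r₀ hp hd hpd hr₀ hmax
end
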